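/- Let A be a real m×n matrix of rank n with m ≥ n. Then det(AᵀA) · (AᵀA)⁻¹ Aᵀ = Σ_{p : det(A_p) ≠ 0} det(A_p)² · embb(A_p⁻¹, p, m), where the sum ranges over all subsets p of {1,…,m} of size n whose associated row-submatrix A_p is invertible. -/

import Mathlib

open scoped Classical
open Matrix

/-- `rowSub A p h` is the `n × n` submatrix of the `m × n` matrix `A` consisting of the
rows of `A` indexed by the subset `p ⊆ {1,…,m}` of size `n`, kept in their original order. -/
noncomputable def rowSub {m n : ℕ} (A : Matrix (Fin m) (Fin n) ℝ)
    (p : Finset (Fin m)) (h : p.card = n) : Matrix (Fin n) (Fin n) ℝ :=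
  fun i j => A (p.orderEmbOfFin h i) j

/-- `embb B p h` is the `n × m` matrix whose `pᵢ`-th column is the `i`-th column of the
`n × n` matrix `B` (where `p₁ < … < p_n` are the elements of `p`), and whose other
columns are zero. -/
noncomputable def embb {m n : ℕ} (B : Matrix (Fin n) (Fin n) ℝ)
    (p : Finset (Fin m)) (h : p.card = n) : Matrix (Fin n) (Fin m) ℝ :=
  fun i k => if hk : k ∈ p then B i ((p.orderIsoOfFin h).symm ⟨k, hk⟩) else 0

/-!
By Cramer's rule, the `(i, k)` entry of `adj (AᵀA) Aᵀ` is `det (Aᵀ A')`, where `A'` is `A` with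
its `i`-th column replaced by the `k`-th unit vector. The Cauchy–Binet formula expands this as
`∑ₚ det A_p · det A'_p`, and `det A'_p` is the `(i, j)` entry of `adj A_p` if `k` is the `j`-th
element of `p`, and `0` if `k ∉ p`. Finally `det M • M⁻¹ = adj M` for the invertible `M = AᵀA`
(this is where `rank A = n` enters), and `det (A_p)² • A_p⁻¹ = det A_p • adj A_p` for every `p`.
-/

open Finset Function

section InjectiveParametrization

variable {α : Type*} [LinearOrder α] {n : ℕ}

theorem Finset.orderEmbOfFin_comp_perm_injective :
    Injective fun x : {s : Finset α // s.card = n} × Equiv.Perm (Fin n) =>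
      x.1.1.orderEmbOfFin x.1.2 ∘ x.2 := by
  rintro ⟨⟨s, hs⟩, σ⟩ ⟨⟨t, ht⟩, τ⟩ h
  have hrange : ∀ (u : Finset α) (hu : u.card = n) (π : Equiv.Perm (Fin n)),
      Set.range (u.orderEmbOfFin hu ∘ π) = u := fun u hu π => by
    rw [Set.range_comp, π.surjective.range_eq, Set.image_univ, range_orderEmbOfFin]
  obtain rfl : s = t := coe_injective <| by
    rw [← hrange s hs σ, ← hrange t ht τ]
    exact congrArg _ h
  obtain rfl : σ = τ := Equiv.ext fun j => (s.orderEmbOfFin hs).injective (congrFun h j)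
  rfl

theorem Function.Injective.exists_eq_orderEmbOfFin_comp_perm {f : Fin n → α}
    (hf : Injective f) :
    ∃ (s : Finset α) (hs : s.card = n) (σ : Equiv.Perm (Fin n)),
      s.orderEmbOfFin hs ∘ σ = f := by
  set s := univ.image f
  have hs : s.card = n := by simp [s, card_image_of_injective _ hf]
  let g : Fin n → s := fun j => ⟨f j, mem_image_of_mem f (mem_univ j)⟩
  have hg : Bijective g := (Fintype.bijective_iff_injective_and_card g).mpr
    ⟨fun a b hab => hf (congrArg Subtype.val hab), by simp [hs]⟩
  refine ⟨s, hs, (Equiv.ofBijective g hg).trans (s.orderIsoOfFin hs).symm.toEquiv, ?_⟩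
  funext j
  simp [← coe_orderIsoOfFin_apply, g]

theorem Finset.sum_fun_eq_sum_orderEmbOfFin_comp_perm [Fintype α] {M : Type*} [AddCommMonoid M]
    (F : (Fin n → α) → M) (hF : ∀ f, ¬ Injective f → F f = 0) :
    ∑ f, F f = ∑ p : {s : Finset α // s.card = n}, ∑ σ : Equiv.Perm (Fin n),
      F (p.1.orderEmbOfFin p.2 ∘ σ) := by
  rw [← Fintype.sum_prod_type']
  refine (sum_of_injOn _ orderEmbOfFin_comp_perm_injective.injOn (fun _ _ => mem_univ _)
    (fun f _ hf => hF f fun hinj => hf ?_) fun _ _ => rfl).symm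
  obtain ⟨s, hs, σ, rfl⟩ := hinj.exists_eq_orderEmbOfFin_comp_perm
  exact ⟨(⟨s, hs⟩, σ), by simp, rfl⟩

end InjectiveParametrization

namespace Matrix

section CauchyBinet

variable {R ι α : Type*} [CommRing R]

section

variable [Fintype ι] [DecidableEq ι]

theorem det_mul_eq_sum_prod_mul_det_submatrix [Fintype α] (B : Matrix ι α R)
    (C : Matrix α ι R) :
    (B * C).det = ∑ f : ι → α, (∏ j, C (f j) j) * (B.submatrix id f).det := by
  calc (B * C).det
      = ∑ f : ι → α, ∑ σ : Equiv.Perm ι,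
          (Equiv.Perm.sign σ : R) * ∏ i, B (σ i) (f i) * C (f i) i := by
        simp only [det_apply', mul_apply, prod_univ_sum, mul_sum, Fintype.piFinset_univ]
        exact sum_comm
    _ = _ := by
        refine sum_congr rfl fun f _ => ?_
        simp only [det_apply', mul_sum, prod_mul_distrib, submatrix_apply, id_eq]
        exact sum_congr rfl fun σ _ => by ring

theorem det_submatrix_eq_zero_of_not_injective (B : Matrix ι α R) {f : ι → α}
    (hf : ¬ Injective f) : (B.submatrix id f).det = 0 := by
  obtain ⟨i, j, hij, hne⟩ : ∃ i j, f i = f j ∧ i ≠ j := by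
    simpa [Injective] using hf
  exact det_zero_of_column_eq hne fun k => by simp [hij]

end

variable {n : ℕ}

theorem sum_perm_prod_mul_det_submatrix_comp (B : Matrix (Fin n) α R) (C : Matrix α (Fin n) R)
    (g : Fin n → α) :
    ∑ σ : Equiv.Perm (Fin n), (∏ j, C (g (σ j)) j) * (B.submatrix id (g ∘ σ)).det =
      (B.submatrix id g).det * (C.submatrix g id).det := by
  have hperm : ∀ σ : Equiv.Perm (Fin n), B.submatrix id (g ∘ σ) =
      (B.submatrix id g).submatrix id σ := fun _ => rfl
  simp only [hperm, det_permute', det_apply' (C.submatrix g id), mul_sum, submatrix_apply, id_eq]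
  exact sum_congr rfl fun σ _ => by ring

theorem det_mul_eq_sum_det_submatrix_mul_det_submatrix [LinearOrder α] [Fintype α]
    (B : Matrix (Fin n) α R) (C : Matrix α (Fin n) R) :
    (B * C).det = ∑ p : {s : Finset α // s.card = n},
      (B.submatrix id (p.1.orderEmbOfFin p.2)).det *
        (C.submatrix (p.1.orderEmbOfFin p.2) id).det := by
  rw [det_mul_eq_sum_prod_mul_det_submatrix, sum_fun_eq_sum_orderEmbOfFin_comp_perm _
    fun f hf => by rw [det_submatrix_eq_zero_of_not_injective B hf, mul_zero]]
  exact sum_congr rfl fun p _ => sum_perm_prod_mul_det_submatrix_comp B C _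

end CauchyBinet

theorem submatrix_id_updateCol {R ι κ κ' : Type*} [DecidableEq ι] (A : Matrix κ ι R)
    (f : κ' → κ) (j : ι) (c : κ → R) :
    (A.updateCol j c).submatrix f id = (A.submatrix f id).updateCol j (c ∘ f) := by
  ext a b
  by_cases hb : b = j <;> simp [hb]

section Adjugate

variable {R ι κ : Type*} [CommRing R] [Fintype ι] [DecidableEq ι]

theorem det_updateCol_single (B : Matrix ι ι R) (i j : ι) :
    (B.updateCol i (Pi.single j 1)).det = B.adjugate i j := by
  rw [← det_transpose, ← updateRow_transpose, ← adjugate_apply, ← adjugate_transpose,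
    transpose_apply]

theorem adjugate_mul_mul_apply [Fintype κ] [DecidableEq κ] (B : Matrix ι κ R)
    (C : Matrix κ ι R) (i : ι) (k : κ) :
    ((B * C).adjugate * B) i k = (B * C.updateCol i (Pi.single k 1)).det := by
  rw [mul_updateCol, mulVec_single_one, ← cramer_apply, cramer_eq_adjugate_mulVec]
  rfl

theorem det_smul_inv_eq_adjugate {B : Matrix ι ι R} (h : IsUnit B.det) :
    B.det • B⁻¹ = B.adjugate := by
  rw [inv_def, smul_smul, Ring.mul_inverse_cancel _ h, one_smul]

theorem sq_det_smul_inv {K : Type*} [Field K] (B : Matrix ι ι K) :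
    B.det ^ 2 • B⁻¹ = B.det • B.adjugate := by
  rw [inv_def, smul_smul, Ring.inverse_eq_inv', sq, mul_self_mul_inv]

theorem isUnit_of_rank_eq_card {K : Type*} [Field K] {B : Matrix ι ι K}
    (h : B.rank = Fintype.card ι) : IsUnit B := by
  rw [← mulVec_surjective_iff_isUnit]
  refine LinearMap.range_eq_top.mp
    (Submodule.eq_top_of_finrank_eq (S := LinearMap.range B.mulVecLin) ?_)
  rw [← rank, h, Module.finrank_fintype_fun_eq_card]

end Adjugate

end Matrix

section Embb

variable {m n : ℕ}

theorem embb_smul (c : ℝ) (B : Matrix (Fin n) (Fin n) ℝ) (p : Finset (Fin m)) (h : p.card = n) :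
    embb (c • B) p h = c • embb B p h := by
  ext i k
  by_cases hk : k ∈ p <;> simp [embb, hk]

theorem det_updateCol_single_comp_orderEmbOfFin (B : Matrix (Fin n) (Fin n) ℝ)
    (p : Finset (Fin m)) (h : p.card = n) (i : Fin n) (k : Fin m) :
    (B.updateCol i (Pi.single k 1 ∘ p.orderEmbOfFin h)).det = embb B.adjugate p h i k := by
  by_cases hk : k ∈ p
  · generalize hj : (p.orderIsoOfFin h).symm ⟨k, hk⟩ = j
    have hjk : p.orderEmbOfFin h j = k := by
      rw [← hj, ← coe_orderIsoOfFin_apply, OrderIso.apply_symm_apply]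
    have hcol : Pi.single k 1 ∘ p.orderEmbOfFin h = Pi.single j (1 : ℝ) := by
      subst hjk
      exact funext fun a => by simp [Pi.single_apply, (p.orderEmbOfFin h).injective.eq_iff]
    rw [hcol, det_updateCol_single, embb, dif_pos hk, hj]
  · refine (det_eq_zero_of_column_eq_zero i fun a => ?_).trans (by simp [embb, hk])
    have : p.orderEmbOfFin h a ≠ k := fun ha => hk (ha ▸ orderEmbOfFin_mem p h a)
    simp [this]

theorem sq_det_smul_embb_inv (B : Matrix (Fin n) (Fin n) ℝ) (p : Finset (Fin m))
    (h : p.card = n) : B.det ^ 2 • embb B⁻¹ p h = B.det • embb B.adjugate p h := by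
  rw [← embb_smul, ← embb_smul, sq_det_smul_inv]

theorem adjugate_transpose_mul_self_mul_transpose (A : Matrix (Fin m) (Fin n) ℝ) :
    (Aᵀ * A).adjugate * Aᵀ = ∑ p : {s : Finset (Fin m) // s.card = n},
      (rowSub A p.1 p.2).det • embb (rowSub A p.1 p.2).adjugate p.1 p.2 := by
  ext i k
  rw [adjugate_mul_mul_apply, det_mul_eq_sum_det_submatrix_mul_det_submatrix, Matrix.sum_apply]
  refine sum_congr rfl fun p _ => ?_
  rw [← transpose_submatrix, det_transpose, submatrix_id_updateCol,
    Matrix.smul_apply, smul_eq_mul]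
  exact congrArg _ (det_updateCol_single_comp_orderEmbOfFin _ p.1 p.2 i k)

end Embb

theorem det_smul_pinv_eq_sum_embb_general {m n : ℕ}
    (A : Matrix (Fin m) (Fin n) ℝ) (hA : A.rank = n) :
    (A.transpose * A).det • ((A.transpose * A)⁻¹ * A.transpose) =
      ∑ p : {s : Finset (Fin m) // s.card = n},
        if (rowSub A p.1 p.2).det ≠ 0 then
          ((rowSub A p.1 p.2).det ^ 2) • embb (rowSub A p.1 p.2)⁻¹ p.1 p.2
        else 0 := by
  have hdet : IsUnit (Aᵀ * A).det := (isUnit_iff_isUnit_det _).mp <|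
    isUnit_of_rank_eq_card (by rw [rank_transpose_mul_self, hA, Fintype.card_fin])
  rw [← smul_mul, det_smul_inv_eq_adjugate hdet, adjugate_transpose_mul_self_mul_transpose]
  refine sum_congr rfl fun p _ => ?_
  rw [← sq_det_smul_embb_inv]
  split_ifs with h
  · rfl
  · rw [not_not.mp h, zero_pow two_ne_zero, zero_smul]

theorem det_smul_pinv_eq_sum_embb {m n : ℕ} (hmn : n ≤ m)
    (A : Matrix (Fin m) (Fin n) ℝ) (hA : A.rank = n) :
    (A.transpose * A).det • ((A.transpose * A)⁻¹ * A.transpose) =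
      ∑ p : {s : Finset (Fin m) // s.card = n},
        if (rowSub A p.1 p.2).det ≠ 0 then
          ((rowSub A p.1 p.2).det ^ 2) • embb (rowSub A p.1 p.2)⁻¹ p.1 p.2
        else 0 :=
  det_smul_pinv_eq_sum_embb_general A hA
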